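/- With m₁(n) = n D(n−1) and m₂(n) = n²{D(n−1)² − 2D'(n−1)}, one has m₁(n) → 1, m₂(n) → 3, and hence m₂(n) − m₁(n)² → 2, as the integer n → ∞. -/

import Mathlib

/-!
The functional equation `Ψ(x + 1) = Ψ(x) + 1/x` gives `D(ν) + D(ν + 1) = 2/ν`, hence
`D'(ν) + D'(ν + 1) = -2/ν²`. Since `Γ` is log-convex, `Ψ` is monotone and `D ≥ 0`, so
`0 ≤ D(ν) ≤ 2/ν`; telescoping then yields `D(ν) = ∑ₖ 2/((ν + 2k)(ν + 2k + 1))`, a series of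
convex functions, so `D` is convex and `D'` is nondecreasing. Monotonicity of `D'` squeezes
`D'(ν)` between `-1/(ν - 1)²` and `-1/ν²`; in particular `D` decreases, which squeezes `D(ν)`
between `1/ν` and `1/(ν - 1)`. Hence `n D(n - 1) → 1` and `n² D'(n - 1) → -1`, and
`m₂(n) - m₁(n)² = -2 n² D'(n - 1)`.
-/

open Real Filter

/-- The digamma function `Ψ(x) = d/dx log Γ(x)`. -/
noncomputable def digamma (x : ℝ) : ℝ :=
  deriv (fun y => Real.log (Real.Gamma y)) x

/-- `D(ν) = Ψ((ν+1)/2) − Ψ(ν/2)`. -/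
noncomputable def Dfun (ν : ℝ) : ℝ :=
  digamma ((ν + 1) / 2) - digamma (ν / 2)

/-- `m₁(n) = n D(n−1)`. -/
noncomputable def m₁ (n : ℕ) : ℝ := (n : ℝ) * Dfun ((n : ℝ) - 1)

/-- `m₂(n) = n² (D(n−1)² − 2 D'(n−1))`. -/
noncomputable def m₂ (n : ℕ) : ℝ :=
  (n : ℝ) ^ 2 * ((Dfun ((n : ℝ) - 1)) ^ 2 - 2 * deriv Dfun ((n : ℝ) - 1))


open Set Topology

lemma analyticAt_Gamma_of_pos {x : ℝ} (hx : 0 < x) : AnalyticAt ℝ Gamma x := by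
  have hΓ : Gamma = fun y : ℝ => (Complex.Gamma y).re := by
    ext y; rw [Complex.Gamma_ofReal, Complex.ofReal_re]
  have hopen : IsOpen {z : ℂ | 0 < z.re} := isOpen_lt continuous_const Complex.continuous_re
  have hdiff : DifferentiableOn ℂ Complex.Gamma {z : ℂ | 0 < z.re} := fun z hz =>
    (Complex.differentiableAt_Gamma z fun m hm => by
      simp only [hm, mem_ofPred_eq, Complex.neg_re, Complex.natCast_re, Left.neg_pos_iff] at hz
      exact (Nat.cast_nonneg m).not_gt hz).differentiableWithinAt
  rw [hΓ]
  exact AnalyticAt.re_ofReal (hdiff.analyticAt (hopen.mem_nhds (by simpa using hx)))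

lemma analyticAt_digamma {x : ℝ} (hx : 0 < x) : AnalyticAt ℝ digamma x :=
  ((analyticAt_Gamma_of_pos hx).log (Gamma_pos_of_pos hx)).deriv

lemma digamma_add_one {x : ℝ} (hx : 0 < x) : digamma (x + 1) = digamma x + x⁻¹ := by
  have hlog : (fun y => log (Gamma (y + 1))) =ᶠ[𝓝 x] fun y => log (Gamma y) + log y := by
    filter_upwards [eventually_gt_nhds hx] with y hy
    rw [Gamma_add_one hy.ne', log_mul hy.ne' (Gamma_pos_of_pos hy).ne', add_comm]
  have hd : DifferentiableAt ℝ (fun y => log (Gamma y)) x :=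
    ((analyticAt_Gamma_of_pos hx).log (Gamma_pos_of_pos hx)).differentiableAt
  rw [digamma, ← deriv_comp_add_const, hlog.deriv_eq,
    deriv_fun_add hd (differentiableAt_log hx.ne'), deriv_log]
  rfl

lemma monotoneOn_digamma : MonotoneOn digamma (Ioi 0) :=
  convexOn_log_Gamma.monotoneOn_deriv fun _ hx =>
    ((analyticAt_Gamma_of_pos hx).log (Gamma_pos_of_pos hx)).differentiableAt

lemma hasDerivAt_Dfun {ν : ℝ} (hν : 0 < ν) : HasDerivAt Dfun (deriv Dfun ν) ν := by
  have h₁ : AnalyticAt ℝ (fun y : ℝ => digamma ((y + 1) / 2)) ν :=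
    (analyticAt_digamma (by linarith)).comp (by fun_prop)
  have h₂ : AnalyticAt ℝ (fun y : ℝ => digamma (y / 2)) ν :=
    (analyticAt_digamma (by linarith)).comp (by fun_prop)
  exact (h₁.sub h₂).differentiableAt.hasDerivAt

lemma Dfun_add_Dfun_add_one {ν : ℝ} (hν : 0 < ν) : Dfun ν + Dfun (ν + 1) = 2 / ν := by
  have h := digamma_add_one (half_pos hν)
  rw [show ν / 2 + 1 = (ν + 1 + 1) / 2 by ring] at h
  rw [Dfun, Dfun, h]
  field_simp
  ring

lemma Dfun_nonneg {ν : ℝ} (hν : 0 < ν) : 0 ≤ Dfun ν :=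
  sub_nonneg.mpr <| monotoneOn_digamma (half_pos hν) (mem_Ioi.mpr (by linarith))
    (by linarith)

lemma tendsto_Dfun_atTop : Tendsto Dfun atTop (𝓝 0) := by
  have hbound : Tendsto (fun ν : ℝ => 2 * ν⁻¹) atTop (𝓝 0) := by
    simpa using tendsto_inv_atTop_zero.const_mul (2 : ℝ)
  refine tendsto_of_tendsto_of_tendsto_of_le_of_le' tendsto_const_nhds hbound ?_ ?_
  · filter_upwards [eventually_gt_atTop 0] with ν hν using Dfun_nonneg hν
  · filter_upwards [eventually_gt_atTop 0] with ν hν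
    have hrec := Dfun_add_Dfun_add_one hν
    have hnext := Dfun_nonneg (by linarith : 0 < ν + 1)
    rw [← div_eq_mul_inv]
    linarith

/-- `D(ν) = ∑ₖ dfunTerm (ν + 2k)`. -/
noncomputable def dfunTerm (t : ℝ) : ℝ := 2 / (t * (t + 1))

lemma Dfun_sub_Dfun_add_two {ν : ℝ} (hν : 0 < ν) : Dfun ν - Dfun (ν + 2) = dfunTerm ν := by
  have h₀ := Dfun_add_Dfun_add_one hν
  have h₁ := Dfun_add_Dfun_add_one (by linarith : 0 < ν + 1)
  rw [show ν + 1 + 1 = ν + 2 by ring] at h₁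
  rw [show Dfun ν - Dfun (ν + 2) = 2 / ν - 2 / (ν + 1) by linarith, dfunTerm]
  field_simp
  ring

lemma Dfun_eq_sum_add {ν : ℝ} (hν : 0 < ν) (k : ℕ) :
    Dfun ν = ∑ i ∈ Finset.range k, dfunTerm (ν + 2 * i) + Dfun (ν + 2 * k) := by
  induction k with
  | zero => simp
  | succ k ih =>
    have h := Dfun_sub_Dfun_add_two (by positivity : 0 < ν + 2 * k)
    rw [Finset.sum_range_succ, ih, Nat.cast_succ, mul_add_one, ← add_assoc]
    linarith

lemma tendsto_sum_dfunTerm {ν : ℝ} (hν : 0 < ν) :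
    Tendsto (fun k : ℕ => ∑ i ∈ Finset.range k, dfunTerm (ν + 2 * i)) atTop (𝓝 (Dfun ν)) := by
  have htail : Tendsto (fun k : ℕ => Dfun (ν + 2 * k)) atTop (𝓝 0) :=
    tendsto_Dfun_atTop.comp <| tendsto_atTop_add_const_left _ ν <|
      tendsto_natCast_atTop_atTop.const_mul_atTop two_pos
  simpa using (tendsto_const_nhds.sub htail).congr fun k => by linarith [Dfun_eq_sum_add hν k]

lemma convexOn_of_tendsto {E ι : Type*} [AddCommGroup E] [Module ℝ E] {s : Set E}
    {l : Filter ι} [l.NeBot] {F : ι → E → ℝ} {f : E → ℝ} (hs : Convex ℝ s)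
    (hF : ∀ i, ConvexOn ℝ s (F i)) (hlim : ∀ x ∈ s, Tendsto (fun i => F i x) l (𝓝 (f x))) :
    ConvexOn ℝ s f := by
  refine ⟨hs, fun x hx y hy a b ha hb hab => ?_⟩
  exact le_of_tendsto_of_tendsto' (hlim _ (hs hx hy ha hb hab))
    (((hlim x hx).const_smul a).add ((hlim y hy).const_smul b))
    fun i => (hF i).2 hx hy ha hb hab

lemma convexOn_finset_sum {E ι : Type*} [AddCommGroup E] [Module ℝ E] {s : Set E}
    (hs : Convex ℝ s) (t : Finset ι) {F : ι → E → ℝ} (hF : ∀ i ∈ t, ConvexOn ℝ s (F i)) :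
    ConvexOn ℝ s fun x => ∑ i ∈ t, F i x := by
  have h := Finset.sum_induction F (ConvexOn ℝ s) (fun _ _ => ConvexOn.add)
    (convexOn_const 0 hs) hF
  convert h using 1
  ext x
  rw [Finset.sum_apply]

lemma ConvexOn.comp_add_const_Ioi {g : ℝ → ℝ} (hg : ConvexOn ℝ (Ioi 0) g) {c : ℝ} (hc : 0 ≤ c) :
    ConvexOn ℝ (Ioi 0) fun x => g (x + c) := by
  refine ((hg.translate_right c).subset (fun x hx => ?_) (convex_Ioi 0)).congr fun x _ => ?_
  · simp only [mem_preimage, mem_Ioi] at hx ⊢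
    linarith
  · simp [add_comm]

lemma convexOn_dfunTerm : ConvexOn ℝ (Ioi 0) dfunTerm := by
  have hinv : ConvexOn ℝ (Ioi 0) fun t : ℝ => t⁻¹ := by
    simpa using convexOn_zpow (𝕜 := ℝ) (-1)
  have hanti : AntitoneOn (fun t : ℝ => t⁻¹) (Ioi 0) := fun a ha _ _ hab => inv_anti₀ ha hab
  have hanti₁ : AntitoneOn (fun t : ℝ => (t + 1)⁻¹) (Ioi 0) := fun a ha _ _ hab =>
    inv_anti₀ (by simp only [mem_Ioi] at ha; linarith) (by linarith)
  have hnonneg : ∀ t ∈ Ioi (0 : ℝ), 0 ≤ t⁻¹ := fun t ht => inv_nonneg.mpr (le_of_lt ht)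
  have hnonneg₁ : ∀ t ∈ Ioi (0 : ℝ), 0 ≤ (t + 1)⁻¹ := fun t ht =>
    inv_nonneg.mpr (by simp only [mem_Ioi] at ht; linarith)
  have hprod := (hinv.mul (hinv.comp_add_const_Ioi zero_le_one) hnonneg hnonneg₁
    (hanti.monovaryOn hanti₁)).smul (zero_le_two (α := ℝ))
  refine hprod.congr fun t _ => ?_
  simp [dfunTerm, div_eq_mul_inv, mul_comm]

lemma convexOn_Dfun : ConvexOn ℝ (Ioi 0) Dfun :=
  convexOn_of_tendsto (convex_Ioi 0)
    (fun _ => convexOn_finset_sum (convex_Ioi 0) _ fun _ _ =>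
      convexOn_dfunTerm.comp_add_const_Ioi (by positivity))
    fun _ hν => tendsto_sum_dfunTerm hν

lemma deriv_Dfun_add_deriv_Dfun_add_one {ν : ℝ} (hν : 0 < ν) :
    deriv Dfun ν + deriv Dfun (ν + 1) = -2 / ν ^ 2 := by
  have hsum : HasDerivAt (fun y => Dfun y + Dfun (y + 1))
      (deriv Dfun ν + deriv Dfun (ν + 1)) ν :=
    (hasDerivAt_Dfun hν).add ((hasDerivAt_Dfun (by linarith)).comp_add_const ν 1)
  have hrhs : HasDerivAt (fun y : ℝ => 2 / y) (-2 / ν ^ 2) ν := by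
    simpa [div_eq_mul_inv] using (hasDerivAt_inv hν.ne').const_mul 2
  refine hsum.unique (hrhs.congr_of_eventuallyEq ?_)
  filter_upwards [eventually_gt_nhds hν] with y hy using Dfun_add_Dfun_add_one hy

lemma monotoneOn_deriv_Dfun : MonotoneOn (deriv Dfun) (Ioi 0) :=
  convexOn_Dfun.monotoneOn_deriv fun _ hx => (hasDerivAt_Dfun hx).differentiableAt

lemma deriv_Dfun_le {ν : ℝ} (hν : 0 < ν) : deriv Dfun ν ≤ -1 / ν ^ 2 := by
  have hmono := monotoneOn_deriv_Dfun hν (mem_Ioi.mpr (by linarith))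
    (le_add_of_nonneg_right zero_le_one)
  linarith [deriv_Dfun_add_deriv_Dfun_add_one hν, show -2 / ν ^ 2 = 2 * (-1 / ν ^ 2) by ring]

lemma le_deriv_Dfun {ν : ℝ} (hν : 1 < ν) : -1 / (ν - 1) ^ 2 ≤ deriv Dfun ν := by
  have hrec := deriv_Dfun_add_deriv_Dfun_add_one (sub_pos.mpr hν)
  rw [sub_add_cancel] at hrec
  have hmono := monotoneOn_deriv_Dfun (sub_pos.mpr hν) (mem_Ioi.mpr (by linarith))
    (sub_le_self ν zero_le_one)
  linarith [show -2 / (ν - 1) ^ 2 = 2 * (-1 / (ν - 1) ^ 2) by ring]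

lemma antitoneOn_Dfun : AntitoneOn Dfun (Ioi 0) := by
  refine antitoneOn_of_deriv_nonpos (convex_Ioi 0)
    (fun x hx => (hasDerivAt_Dfun hx).continuousAt.continuousWithinAt) ?_ ?_ <;>
    rw [interior_Ioi]
  · exact fun x hx => (hasDerivAt_Dfun hx).differentiableAt.differentiableWithinAt
  · exact fun x hx =>
      (deriv_Dfun_le hx).trans (div_nonpos_of_nonpos_of_nonneg (by norm_num) (sq_nonneg x))

lemma one_div_le_Dfun {ν : ℝ} (hν : 0 < ν) : 1 / ν ≤ Dfun ν := by
  have hanti := antitoneOn_Dfun hν (mem_Ioi.mpr (by linarith))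
    (le_add_of_nonneg_right zero_le_one)
  linarith [Dfun_add_Dfun_add_one hν, show 2 / ν = 2 * (1 / ν) by ring]

lemma Dfun_le_one_div {ν : ℝ} (hν : 1 < ν) : Dfun ν ≤ 1 / (ν - 1) := by
  have hrec := Dfun_add_Dfun_add_one (sub_pos.mpr hν)
  rw [sub_add_cancel] at hrec
  have hanti := antitoneOn_Dfun (sub_pos.mpr hν) (mem_Ioi.mpr (by linarith))
    (sub_le_self ν zero_le_one)
  linarith [show 2 / (ν - 1) = 2 * (1 / (ν - 1)) by ring]

lemma tendsto_add_div_add_atTop (a b : ℝ) :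
    Tendsto (fun x : ℝ => (x + a) / (x + b)) atTop (𝓝 1) := by
  have h : Tendsto (fun x : ℝ => 1 + (a - b) * (x + b)⁻¹) atTop (𝓝 (1 + (a - b) * 0)) :=
    tendsto_const_nhds.add <| (tendsto_inv_atTop_zero.comp <|
      tendsto_atTop_add_const_right _ b tendsto_id).const_mul _
  rw [mul_zero, add_zero] at h
  refine h.congr' ?_
  filter_upwards [eventually_gt_atTop (-b)] with x hx
  field_simp [show x + b ≠ 0 by linarith]
  ring

lemma tendsto_mul_Dfun_atTop : Tendsto (fun x => (x + 1) * Dfun x) atTop (𝓝 1) := by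
  have hlo : Tendsto (fun x : ℝ => (x + 1) / x) atTop (𝓝 1) := by
    simpa using tendsto_add_div_add_atTop 1 0
  have hhi : Tendsto (fun x : ℝ => (x + 1) / (x - 1)) atTop (𝓝 1) := by
    simpa [← sub_eq_add_neg] using tendsto_add_div_add_atTop 1 (-1)
  refine tendsto_of_tendsto_of_tendsto_of_le_of_le' hlo hhi ?_ ?_ <;>
    filter_upwards [eventually_gt_atTop 1] with x hx
  · rw [div_eq_mul_one_div]
    exact mul_le_mul_of_nonneg_left (one_div_le_Dfun (by linarith)) (by linarith)
  · rw [div_eq_mul_one_div]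
    exact mul_le_mul_of_nonneg_left (Dfun_le_one_div hx) (by linarith)

lemma tendsto_sq_mul_deriv_Dfun_atTop :
    Tendsto (fun x => (x + 1) ^ 2 * deriv Dfun x) atTop (𝓝 (-1)) := by
  have hlo : Tendsto (fun x : ℝ => -((x + 1) / (x - 1)) ^ 2) atTop (𝓝 (-1)) := by
    simpa [← sub_eq_add_neg] using ((tendsto_add_div_add_atTop 1 (-1)).pow 2).neg
  have hhi : Tendsto (fun x : ℝ => -((x + 1) / x) ^ 2) atTop (𝓝 (-1)) := by
    simpa using ((tendsto_add_div_add_atTop 1 0).pow 2).neg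
  refine tendsto_of_tendsto_of_tendsto_of_le_of_le' hlo hhi ?_ ?_ <;>
    filter_upwards [eventually_gt_atTop 1] with x hx
  · calc -((x + 1) / (x - 1)) ^ 2 = (x + 1) ^ 2 * (-1 / (x - 1) ^ 2) := by rw [div_pow]; ring
      _ ≤ (x + 1) ^ 2 * deriv Dfun x := mul_le_mul_of_nonneg_left (le_deriv_Dfun hx) (sq_nonneg _)
  · calc (x + 1) ^ 2 * deriv Dfun x ≤ (x + 1) ^ 2 * (-1 / x ^ 2) :=
          mul_le_mul_of_nonneg_left (deriv_Dfun_le (by linarith)) (sq_nonneg _)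
      _ = -((x + 1) / x) ^ 2 := by rw [div_pow]; ring

theorem m₁_m₂_limits :
    Tendsto (fun n : ℕ => m₁ n) atTop (nhds 1) ∧
    Tendsto (fun n : ℕ => m₂ n) atTop (nhds 3) ∧
    Tendsto (fun n : ℕ => m₂ n - (m₁ n) ^ 2) atTop (nhds 2) := by
  have hshift : Tendsto (fun n : ℕ => (n : ℝ) - 1) atTop atTop :=
    tendsto_atTop_add_const_right _ (-1) tendsto_natCast_atTop_atTop
  have hm₁ : Tendsto (fun n : ℕ => m₁ n) atTop (𝓝 1) :=
    (tendsto_mul_Dfun_atTop.comp hshift).congr fun n => by simp [m₁]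
  have hvar : Tendsto (fun n : ℕ => m₂ n - m₁ n ^ 2) atTop (𝓝 2) := by
    have h := (tendsto_sq_mul_deriv_Dfun_atTop.comp hshift).const_mul (-2)
    rw [show (-2 : ℝ) * -1 = 2 by norm_num] at h
    refine h.congr fun n => ?_
    simp only [Function.comp, m₁, m₂, sub_add_cancel]
    ring
  refine ⟨hm₁, ?_, hvar⟩
  simpa [show (1 : ℝ) + 2 = 3 by norm_num] using (hm₁.pow 2).add hvar
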